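/- Consider the arena A with V1 = {v_0}, V0 = {v_1}, initial vertex v_0, and edges (v_0, v_1) with weight −1, (v_1, v_1) with weight −1, and (v_1, v_0) labelled R. Let cap ∈ ℕ be even with cap ≥ 2 and t = cap/2. Then Player 0 has a winning strategy for (A, AvgRecharge(w, cap, t)) that is finite-state of size cap, but Player 0 has no winning strategy for (A, AvgRecharge(w, cap, t)) that is finite-state of size n for any n < cap. -/

import Mathlib

/-- An arena: a directed graph without terminal vertices, a set `V0` of Player 0's
vertices (Player 1 controls the complement), and an initial vertex. -/
structure Arena (V : Type) where
  V0 : Set V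
  E : V → V → Prop
  vI : V
  succ : ∀ v, ∃ v', E v v'

/-- A play: an infinite path starting in the initial vertex. -/
def Arena.Play {V : Type} (A : Arena V) (ρ : ℕ → V) : Prop :=
  ρ 0 = A.vI ∧ ∀ n, A.E (ρ n) (ρ (n + 1))

/-- The play prefix `ρ 0 ⋯ ρ n` as a list. -/
def prefixList {V : Type} (ρ : ℕ → V) (n : ℕ) : List V :=
  (List.range (n + 1)).map ρ

/-- A strategy for the player controlling the vertices in `p`. -/
def Arena.IsStrategy {V : Type} (A : Arena V) (p : Set V) (σ : List V → V) : Prop :=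
  ∀ (h : List V) (v : V), v ∈ p → A.E v (σ (h ++ [v]))

/-- Consistency of a play with a strategy of the player controlling `p`. -/
def Arena.ConsistentWith {V : Type} (A : Arena V) (p : Set V) (σ : List V → V) (ρ : ℕ → V) : Prop :=
  ∀ n, ρ n ∈ p → ρ (n + 1) = σ (prefixList ρ n)

/-- `σ` is a winning strategy for the player controlling `p` with objective `Obj`. -/
def Arena.WinningStrategy {V : Type} (A : Arena V) (p : Set V) (Obj : Set (ℕ → V))
    (σ : List V → V) : Prop :=
  A.IsStrategy p σ ∧ ∀ ρ, A.Play ρ → A.ConsistentWith p σ ρ → ρ ∈ Obj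

/-- Player 0 wins the game `(A, Win)`. -/
def Arena.Player0Wins {V : Type} (A : Arena V) (Win : Set (ℕ → V)) : Prop :=
  ∃ σ, A.WinningStrategy A.V0 Win σ

/-- `h` is a finite play prefix consistent with the strategy `σ` of the player controlling `p`. -/
def Arena.FinPrefix {V : Type} (A : Arena V) (p : Set V) (σ : List V → V) (h : List V) : Prop :=
  ∃ ρ n, A.Play ρ ∧ A.ConsistentWith p σ ρ ∧ h = prefixList ρ n

/-- A positional strategy only depends on the last vertex. -/
def Positional {X : Type} (σ : List X → X) : Prop :=
  ∀ (h : List X) (v : X), σ (h ++ [v]) = σ [v]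

/-- The energy level of the play prefix `ρ 0 ⋯ ρ n` is `EL w ρ n`:
the sum of the weights of its `n` edges. -/
def EL {V : Type} (w : V → V → ℤ) (ρ : ℕ → V) (n : ℕ) : ℤ :=
  ∑ i ∈ Finset.range n, w (ρ i) (ρ (i + 1))

/-- The energy level of a finite play prefix given as a list. -/
def ELl {V : Type} (w : V → V → ℤ) : List V → ℤ
  | [] => 0
  | [_] => 0
  | a :: b :: l => w a b + ELl w (b :: l)

/-- The average accumulated energy of the first `n` prefixes. -/
noncomputable def avgEL {V : Type} (w : V → V → ℤ) (ρ : ℕ → V) (n : ℕ) : ℝ :=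
  (∑ i ∈ Finset.range n, (EL w ρ i : ℝ)) / (n : ℝ)

/-- The lower-bounded energy objective. -/
def EnergyL {V : Type} (w : V → V → ℤ) : Set (ℕ → V) :=
  {ρ | ∀ n, 0 ≤ EL w ρ n}

/-- The lower- and upper-bounded energy objective. -/
def EnergyLU {V : Type} (w : V → V → ℤ) (cap : ℕ) : Set (ℕ → V) :=
  {ρ | ∀ n, 0 ≤ EL w ρ n ∧ EL w ρ n ≤ (cap : ℤ)}

/-- The average-energy objective: limsup of the averages is at most `t`. -/
def AvgE {V : Type} (w : V → V → ℤ) (t : ℝ) : Set (ℕ → V) :=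
  {ρ | Filter.limsup (fun n => (avgEL w ρ n : EReal)) Filter.atTop ≤ (t : EReal)}

/-- The lower-bounded average-energy objective. -/
def AvgEnergyL {V : Type} (w : V → V → ℤ) (t : ℝ) : Set (ℕ → V) :=
  EnergyL w ∩ AvgE w t

/-- The mean-payoff objective. -/
def MP {V : Type} (w : V → V → ℤ) (t : ℝ) : Set (ℕ → V) :=
  {ρ | Filter.limsup (fun n => (((EL w ρ n : ℝ) / (n : ℝ)) : EReal)) Filter.atTop ≤ (t : EReal)}

/-- A memory structure: initial memory state and update along edges. -/
structure Mem (V M : Type) where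
  mI : M
  upd : M → V → V → M

/-- Tracking the memory state along a play. -/
def Mem.track {V M : Type} (mem : Mem V M) (ρ : ℕ → V) : ℕ → M
  | 0 => mem.mI
  | n + 1 => mem.upd (Mem.track mem ρ n) (ρ n) (ρ (n + 1))

def Mem.runAux {V M : Type} (mem : Mem V M) : M → List V → M
  | m, [] => m
  | m, [_] => m
  | m, a :: b :: l => Mem.runAux mem (mem.upd m a b) (b :: l)

/-- `Upd⁺`: the memory state reached along a finite play prefix. -/
def Mem.run {V M : Type} (mem : Mem V M) (h : List V) : M :=
  Mem.runAux mem mem.mI h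

/-- The strategy `σ` is implemented by the memory structure `mem`
(via some next-move function). -/
def Arena.ImplementedBy {V M : Type} (A : Arena V) (mem : Mem V M) (σ : List V → V) : Prop :=
  ∃ nxt : V → M → V, ∀ (h : List V) (v : V), σ (h ++ [v]) = nxt v (mem.run (h ++ [v]))

/-- `σ` is a finite-state strategy of size `k`. -/
def Arena.FiniteStateOfSize {V : Type} (A : Arena V) (k : ℕ) (σ : List V → V) : Prop :=
  ∃ (M : Type) (inst : Fintype M) (mem : Mem V M),
    @Fintype.card M inst = k ∧ A.ImplementedBy mem σ

/-- The expanded arena `A × M`. -/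
def Arena.expand {V M : Type} (A : Arena V) (mem : Mem V M) : Arena (V × M) where
  V0 := {p | p.1 ∈ A.V0}
  E := fun p q => A.E p.1 q.1 ∧ q.2 = mem.upd p.2 p.1 q.1
  vI := (A.vI, mem.mI)
  succ := fun p => by
    obtain ⟨v', h⟩ := A.succ p.1
    exact ⟨(v', mem.upd p.2 p.1 v'), h, rfl⟩

/-- The extended play in `A × M` corresponding to a play in `A`. -/
def extendPlay {V M : Type} (mem : Mem V M) (ρ : ℕ → V) : ℕ → V × M :=
  fun n => (ρ n, Mem.track mem ρ n)

/-- `(A, Win) ≤_M (A × M, Win')`. -/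
def Reduces {V M : Type} (A : Arena V) (mem : Mem V M) (Win : Set (ℕ → V))
    (Win' : Set (ℕ → V × M)) : Prop :=
  ∀ ρ, A.Play ρ → (ρ ∈ Win ↔ extendPlay mem ρ ∈ Win')

/-- A recharge weight function (`none` is the recharge label `R`) assigns
non-positive weights to all (non-recharge) edges. -/
def RechargeWeights {V : Type} (A : Arena V) (w : V → V → Option ℤ) : Prop :=
  ∀ u v, A.E u v → ∀ k : ℤ, w u v = some k → k ≤ 0

/-- The recharge energy level of the prefix `ρ 0 ⋯ ρ n`: the capacity plus the
accumulated weight since the last `R`-edge. -/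
def ELcap {V : Type} (w : V → V → Option ℤ) (cap : ℕ) (ρ : ℕ → V) : ℕ → ℤ
  | 0 => (cap : ℤ)
  | n + 1 =>
    match w (ρ n) (ρ (n + 1)) with
    | none => (cap : ℤ)
    | some k => ELcap w cap ρ n + k

/-- The recharge objective. -/
def Recharge {V : Type} (w : V → V → Option ℤ) (cap : ℕ) : Set (ℕ → V) :=
  {ρ | ∀ n, 0 ≤ ELcap w cap ρ n}

/-- The average of the recharge energy levels of the first `n` prefixes. -/
noncomputable def avgELcap {V : Type} (w : V → V → Option ℤ) (cap : ℕ) (ρ : ℕ → V)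
    (n : ℕ) : ℝ :=
  (∑ i ∈ Finset.range n, (ELcap w cap ρ i : ℝ)) / (n : ℝ)

/-- The average-bounded recharge objective. -/
def AvgRecharge {V : Type} (w : V → V → Option ℤ) (cap : ℕ) (t : ℝ) : Set (ℕ → V) :=
  {ρ | Filter.limsup (fun n => (avgELcap w cap ρ n : EReal)) Filter.atTop ≤ (t : EReal)} ∩
    Recharge w cap

/-- The (max-)parity objective: the maximal color occurring infinitely often is even. -/
def ParityObj {V : Type} (Ω : V → ℕ) : Set (ℕ → V) :=
  {ρ | ∃ c, Even c ∧ {n | Ω (ρ n) = c}.Infinite ∧ ∀ d, {n | Ω (ρ n) = d}.Infinite → d ≤ c}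

/-- The arena with Player 1's vertex `v₀ = 0`, Player 0's vertex `v₁ = 1`, initial
vertex `v₀`, and edges `(v₀,v₁)`, `(v₁,v₁)` and `(v₁,v₀)`. -/
def memTradeArena : Arena (Fin 2) where
  V0 := {1}
  E := fun u v => (u = 0 ∧ v = 1) ∨ u = 1
  vI := 0
  succ := fun u => ⟨1, by fin_cases u <;> simp⟩

/-- The recharge weight function: `(v₀,v₁)` and `(v₁,v₁)` have weight `-1`, and
`(v₁,v₀)` is labelled `R`. -/
def memTradeW : Fin 2 → Fin 2 → Option ℤ :=
  fun u v => if u = 1 ∧ v = 0 then none else some (-1)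

/-- The play `(v₀ v₁ⁿ)^ω`. -/
def memTradePlay (n : ℕ) : ℕ → Fin 2 :=
  fun k => if k % (n + 1) = 0 then 0 else 1

/-! Under the counter strategy the play is `(v₀ v₁^cap)^ω`, whose recharge energy levels run
through `cap, cap - 1, …, 0` periodically and so average `cap / 2`. Against a strategy with
`n < cap` memory states the play is the orbit of a deterministic map on vertex–memory pairs;
by pigeonhole, `n + 1` consecutive visits to `v₁` repeat a pair and then trap the play in the
self-loop, which exhausts the energy. Hence every stretch of `v₁`'s has length at most `n`, the
deficit `cap - EL_cap` stays in `[0, n]`, resets to `0` or grows by one at each step, and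
therefore averages at most `n / 2`: the energy averages at least `cap - n / 2 > cap / 2`. -/

open Filter

lemma prefixList_eq_append {V : Type} (ρ : ℕ → V) (k : ℕ) :
    prefixList ρ k = (List.range k).map ρ ++ [ρ k] := by
  simp [prefixList, List.range_succ]

lemma Mem.runAux_append_pair {V M : Type} (mem : Mem V M) (a b : V) (l : List V) (m : M) :
    mem.runAux m (l ++ [a, b]) = mem.upd (mem.runAux m (l ++ [a])) a b := by
  induction l generalizing m with
  | nil => simp [Mem.runAux]
  | cons c l ih =>
    cases l with
    | nil => simp [Mem.runAux]
    | cons d l => simpa [Mem.runAux] using ih (mem.upd m c d)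

lemma Mem.run_prefixList {V M : Type} (mem : Mem V M) (ρ : ℕ → V) (k : ℕ) :
    mem.run (prefixList ρ k) = mem.track ρ k := by
  induction k with
  | zero => rfl
  | succ k ih =>
    have h : prefixList ρ (k + 1) = (List.range k).map ρ ++ [ρ k, ρ (k + 1)] := by
      simp [prefixList, List.range_succ]
    rw [h, Mem.run, Mem.runAux_append_pair, ← Mem.run, ← prefixList_eq_append, ih, Mem.track]

lemma Arena.consistentWith_iff_of_implemented {V M : Type} (A : Arena V) {p : Set V}
    {σ : List V → V} {mem : Mem V M} {nxt : V → M → V}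
    (hσ : ∀ (h : List V) (v : V), σ (h ++ [v]) = nxt v (mem.run (h ++ [v]))) (ρ : ℕ → V) :
    A.ConsistentWith p σ ρ ↔
      ∀ k, ρ k ∈ p → ρ (k + 1) = nxt (ρ k) (mem.track ρ k) := by
  have h : ∀ k, σ (prefixList ρ k) = nxt (ρ k) (mem.track ρ k) := fun k => by
    rw [prefixList_eq_append, hσ, ← prefixList_eq_append, Mem.run_prefixList]
  simp only [Arena.ConsistentWith, h]

lemma Function.iterate_add_mem_of_iterate_add_eq {α : Type*} {F : α → α} {x : α} {a p : ℕ}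
    (hp : 0 < p) (hper : F^[a + p] x = F^[a] x) {S : Set α} (hS : ∀ j < p, F^[a + j] x ∈ S)
    (t : ℕ) : F^[a + t] x ∈ S := by
  have hpt : Function.IsPeriodicPt F p (F^[a] x) := by
    rw [Function.IsPeriodicPt, Function.IsFixedPt, ← Function.iterate_add_apply, add_comm, hper]
  rw [add_comm, Function.iterate_add_apply, ← hpt.iterate_mod_apply,
    ← Function.iterate_add_apply, add_comm]
  exact hS _ (Nat.mod_lt _ hp)

/-- The potential `2 ∑_{i<m} D i + D m (n + 1 - D m)` grows by at most `n` per step. -/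
lemma two_mul_sum_le_of_reset_or_succ (n : ℤ) (D : ℕ → ℤ) (h0 : D 0 = 0)
    (hstep : ∀ k, D (k + 1) = 0 ∨ D (k + 1) = D k + 1) (hle : ∀ k, D k ≤ n) (m : ℕ) :
    2 * ∑ i ∈ Finset.range m, D i ≤ m * n := by
  have hnonneg : ∀ k, 0 ≤ D k := by
    intro k
    induction k with
    | zero => exact h0.ge
    | succ k ih => rcases hstep k with h | h <;> omega
  have hpot : ∀ m : ℕ, 2 * ∑ i ∈ Finset.range m, D i + D m * (n + 1 - D m) ≤ m * n := by
    intro m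
    induction m with
    | zero => simp [h0]
    | succ m ih =>
      have := hle m
      have := hnonneg m
      rw [Finset.sum_range_succ]
      push_cast
      rcases hstep m with h | h <;> rw [h] <;> nlinarith
  nlinarith [hpot m, hle m, hnonneg m]

lemma succ_mod_succ_eq_ite (N k : ℕ) :
    (k + 1) % (N + 1) = if k % (N + 1) = N then 0 else k % (N + 1) + 1 := by
  have hk : k % (N + 1) < N + 1 := Nat.mod_lt k N.succ_pos
  split_ifs with h
  · rw [← Nat.mod_add_mod, h, Nat.mod_self]
  · rw [← Nat.mod_add_mod, Nat.mod_eq_of_lt (by omega)]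

lemma two_mul_sum_range_mod (N m : ℕ) :
    2 * ∑ i ∈ Finset.range m, ((i % (N + 1) : ℕ) : ℤ) +
      (m % (N + 1) : ℕ) * ((N : ℤ) + 1 - (m % (N + 1) : ℕ)) = m * N := by
  induction m with
  | zero => simp
  | succ m ih =>
    rw [Finset.sum_range_succ, succ_mod_succ_eq_ite]
    split_ifs with h
    · rw [h] at ih ⊢
      simp only [Nat.cast_zero, Nat.cast_add, Nat.cast_one] at ih ⊢
      linarith
    · simp only [Nat.cast_add, Nat.cast_one]
      linarith

lemma limsup_coe_le_of_le_add_div {f : ℕ → ℝ} {t C : ℝ}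
    (h : ∀ m ≥ 1, f m ≤ t + C / m) : limsup (fun m => (f m : EReal)) atTop ≤ t := by
  have hlim : Tendsto (fun m : ℕ => ((t + C / m : ℝ) : EReal)) atTop (nhds (t : EReal)) :=
    EReal.tendsto_coe.mpr (by simpa using (tendsto_const_div_atTop_nhds_zero_nat C).const_add t)
  rw [← hlim.limsup_eq]
  exact limsup_le_limsup (eventually_atTop.mpr ⟨1, fun m hm => EReal.coe_le_coe (h m hm)⟩)

lemma le_limsup_coe_of_le {f : ℕ → ℝ} {c : ℝ} (h : ∀ m ≥ 1, c ≤ f m) :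
    (c : EReal) ≤ limsup (fun m => (f m : EReal)) atTop :=
  le_limsup_of_frequently_le'
    (eventually_atTop.mpr ⟨1, fun m hm => EReal.coe_le_coe (h m hm)⟩).frequently

section MemTrade

variable {cap : ℕ} {ρ : ℕ → Fin 2}

lemma Fin.two_eq_zero_or_eq_one (v : Fin 2) : v = 0 ∨ v = 1 := by
  fin_cases v <;> simp

lemma Fin.two_eq_of_eq_zero_iff {a b : Fin 2} (h : a = 0 ↔ b = 0) : a = b := by
  revert a b; decide

lemma memTradeArena.succ_eq_one_of_eq_zero (hρ : memTradeArena.Play ρ) {k : ℕ} (hk : ρ k = 0) :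
    ρ (k + 1) = 1 := by
  rcases hρ.2 k with ⟨-, h⟩ | h
  · exact h
  · exact absurd (hk.symm.trans h) (by decide)

lemma memTradeArena.eq_one_of_succ_eq_zero (hρ : memTradeArena.Play ρ) {k : ℕ}
    (hk : ρ (k + 1) = 0) : ρ k = 1 := by
  rcases hρ.2 k with ⟨-, h⟩ | h
  · exact absurd (hk.symm.trans h) (by decide)
  · exact h

lemma memTrade_ELcap_succ (hρ : memTradeArena.Play ρ) (k : ℕ) :
    ELcap memTradeW cap ρ (k + 1) =
      if ρ (k + 1) = 0 then (cap : ℤ) else ELcap memTradeW cap ρ k - 1 := by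
  split_ifs with h
  · have hw : memTradeW (ρ k) (ρ (k + 1)) = none := by
      simp [memTradeW, h, memTradeArena.eq_one_of_succ_eq_zero hρ h]
    simp [ELcap, hw]
  · have hw : memTradeW (ρ k) (ρ (k + 1)) = some (-1) := by simp [memTradeW, h]
    simp [ELcap, hw, sub_eq_add_neg]

lemma memTrade_ELcap_of_eq_zero (hρ : memTradeArena.Play ρ) {k : ℕ} (hk : ρ k = 0) :
    ELcap memTradeW cap ρ k = cap := by
  cases k with
  | zero => rfl
  | succ k => rw [memTrade_ELcap_succ hρ, if_pos hk]

lemma memTrade_ELcap_le (hρ : memTradeArena.Play ρ) (k : ℕ) :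
    ELcap memTradeW cap ρ k ≤ cap := by
  induction k with
  | zero => exact le_rfl
  | succ k ih => rw [memTrade_ELcap_succ hρ]; split_ifs <;> omega

lemma memTrade_ELcap_le_add (hρ : memTradeArena.Play ρ) (a t : ℕ) :
    ELcap memTradeW cap ρ a ≤ ELcap memTradeW cap ρ (a + t) + t := by
  induction t with
  | zero => simp
  | succ t ih =>
    have := memTrade_ELcap_le (cap := cap) hρ (a + t)
    rw [← add_assoc, memTrade_ELcap_succ hρ]
    split_ifs <;> push_cast <;> omega

lemma memTrade_not_forever_loop (hρ : memTradeArena.Play ρ) (hR : ρ ∈ Recharge memTradeW cap)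
    (a : ℕ) : ¬ ∀ t, ρ (a + t) = 1 := by
  intro hloop
  have hdec : ∀ t : ℕ, ELcap memTradeW cap ρ (a + t) = ELcap memTradeW cap ρ a - t := by
    intro t
    induction t with
    | zero => simp
    | succ t ih =>
      rw [← add_assoc, memTrade_ELcap_succ hρ, if_neg (by rw [add_assoc, hloop]; decide), ih]
      push_cast
      ring
  have := hR (a + ((ELcap memTradeW cap ρ a).toNat + 1))
  rw [hdec] at this
  omega

lemma memTrade_le_ELcap_of_no_loop_window (hρ : memTradeArena.Play ρ) {n : ℕ}
    (hwin : ∀ a, ¬ ∀ j ≤ n, ρ (a + j) = 1) (k : ℕ) :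
    (cap : ℤ) - n ≤ ELcap memTradeW cap ρ k := by
  by_contra! hk
  have hnk : n ≤ k := by
    have : (cap : ℤ) ≤ ELcap memTradeW cap ρ (0 + k) + k := memTrade_ELcap_le_add hρ 0 k
    rw [zero_add] at this
    omega
  refine hwin (k - n) fun j hj => ?_
  rcases Fin.two_eq_zero_or_eq_one (ρ (k - n + j)) with h0 | h1
  · have hcap := memTrade_ELcap_of_eq_zero (cap := cap) hρ h0
    have := memTrade_ELcap_le_add (cap := cap) hρ (k - n + j) (n - j)
    rw [show k - n + j + (n - j) = k by omega] at this
    omega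
  · exact h1

lemma memTrade_le_avgELcap (hρ : memTradeArena.Play ρ) {n : ℕ}
    (hlow : ∀ k, (cap : ℤ) - n ≤ ELcap memTradeW cap ρ k) {m : ℕ} (hm : 1 ≤ m) :
    (cap : ℝ) - n / 2 ≤ avgELcap memTradeW cap ρ m := by
  have hD := two_mul_sum_le_of_reset_or_succ n (fun k => cap - ELcap memTradeW cap ρ k)
    (sub_eq_zero.mpr rfl)
    (fun k => by rw [memTrade_ELcap_succ hρ]; split_ifs <;> omega)
    (fun k => by linarith [hlow k]) m
  rw [Finset.sum_sub_distrib, Finset.sum_const, Finset.card_range, nsmul_eq_mul] at hD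
  have hZ : (m : ℤ) * (2 * cap - n) ≤
      2 * ∑ i ∈ Finset.range m, ELcap memTradeW cap ρ i := by
    linarith
  have hR : (m : ℝ) * (2 * cap - n) ≤
      2 * ∑ i ∈ Finset.range m, (ELcap memTradeW cap ρ i : ℝ) := by
    exact_mod_cast hZ
  have hmR : (0 : ℝ) < m := by exact_mod_cast hm
  rw [avgELcap, le_div_iff₀ hmR]
  linarith

end MemTrade

section MemoryOutcome

variable {M : Type} (mem : Mem (Fin 2) M) (nxt : Fin 2 → M → Fin 2)

def memTradeStep (p : Fin 2 × M) : Fin 2 × M :=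
  let v := if p.1 = 0 then 1 else nxt p.1 p.2
  (v, mem.upd p.2 p.1 v)

def memTradeOutcome (k : ℕ) : Fin 2 :=
  ((memTradeStep mem nxt)^[k] (0, mem.mI)).1

lemma memTradeStep_iterate (k : ℕ) :
    (memTradeStep mem nxt)^[k] (0, mem.mI) =
      (memTradeOutcome mem nxt k, mem.track (memTradeOutcome mem nxt) k) := by
  induction k with
  | zero => rfl
  | succ k ih =>
    have h : (memTradeStep mem nxt)^[k + 1] (0, mem.mI) = memTradeStep mem nxt
        (memTradeOutcome mem nxt k, mem.track (memTradeOutcome mem nxt) k) := by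
      rw [Function.iterate_succ_apply', ih]
    have h1 : memTradeOutcome mem nxt (k + 1) = _ := congrArg Prod.fst h
    rw [h, Mem.track, h1]
    rfl

lemma memTradeOutcome_succ (k : ℕ) :
    memTradeOutcome mem nxt (k + 1) = if memTradeOutcome mem nxt k = 0 then 1
      else nxt (memTradeOutcome mem nxt k) (mem.track (memTradeOutcome mem nxt) k) := by
  rw [memTradeOutcome, Function.iterate_succ_apply', memTradeStep_iterate]
  rfl

lemma memTradeOutcome_play : memTradeArena.Play (memTradeOutcome mem nxt) := by
  refine ⟨rfl, fun k => ?_⟩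
  rcases Fin.two_eq_zero_or_eq_one (memTradeOutcome mem nxt k) with h | h
  · exact Or.inl ⟨h, by rw [memTradeOutcome_succ, if_pos h]⟩
  · exact Or.inr h

lemma memTradeOutcome_consistentWith {σ : List (Fin 2) → Fin 2}
    (hσ : ∀ (h : List (Fin 2)) (v : Fin 2), σ (h ++ [v]) = nxt v (mem.run (h ++ [v]))) :
    memTradeArena.ConsistentWith memTradeArena.V0 σ (memTradeOutcome mem nxt) := by
  rw [memTradeArena.consistentWith_iff_of_implemented hσ]
  intro k (hk : _ = 1)
  rw [memTradeOutcome_succ, if_neg (by rw [hk]; decide)]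

lemma memTradeOutcome_no_loop_window [Fintype M] {cap : ℕ}
    (hR : memTradeOutcome mem nxt ∈ Recharge memTradeW cap) (a : ℕ) :
    ¬ ∀ j ≤ Fintype.card M, memTradeOutcome mem nxt (a + j) = 1 := by
  intro hwin
  obtain ⟨i, j, hij, heq⟩ := Fintype.exists_ne_map_eq_of_card_lt
    (fun j : Fin (Fintype.card M + 1) => mem.track (memTradeOutcome mem nxt) (a + j)) (by simp)
  wlog hlt : i < j generalizing i j
  · exact this j i hij.symm heq.symm (lt_of_le_of_ne (not_lt.mp hlt) hij.symm)
  have hper : (memTradeStep mem nxt)^[a + i + (j - i)] (0, mem.mI) =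
      (memTradeStep mem nxt)^[a + i] (0, mem.mI) := by
    rw [show a + i + (j - i : ℕ) = a + j by omega, memTradeStep_iterate, memTradeStep_iterate,
      hwin i (by omega), hwin j (by omega)]
    exact congrArg _ heq.symm
  refine memTrade_not_forever_loop (memTradeOutcome_play mem nxt) hR (a + i) fun t => ?_
  have := Function.iterate_add_mem_of_iterate_add_eq (S := {p | p.1 = 1}) (by omega) hper
    (fun l hl => by
      rw [memTradeStep_iterate, add_assoc]
      exact hwin (i + l) (by omega)) t
  rwa [memTradeStep_iterate] at this

end MemoryOutcome

lemma memTradePlay_eq_zero_iff {N k : ℕ} : memTradePlay N k = 0 ↔ k % (N + 1) = 0 := by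
  unfold memTradePlay
  split_ifs with h <;> simp [h]

lemma memTradePlay_succ_eq_zero_iff {N k : ℕ} :
    memTradePlay N (k + 1) = 0 ↔ k % (N + 1) = N := by
  rw [memTradePlay_eq_zero_iff, succ_mod_succ_eq_ite]
  split_ifs <;> simp [*]

lemma memTradePlay_play {N : ℕ} (hN : 0 < N) : memTradeArena.Play (memTradePlay N) := by
  refine ⟨by simp [memTradePlay, memTradeArena], fun k => ?_⟩
  rcases Fin.two_eq_zero_or_eq_one (memTradePlay N k) with h | h
  · refine Or.inl ⟨h, ?_⟩
    rw [memTradePlay_eq_zero_iff] at h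
    simp [memTradePlay, succ_mod_succ_eq_ite, h, hN.ne]
  · exact Or.inr h

lemma memTradePlay_ELcap {cap : ℕ} (hcap : 0 < cap) (k : ℕ) :
    ELcap memTradeW cap (memTradePlay cap) k = cap - (k % (cap + 1) : ℕ) := by
  induction k with
  | zero => simp [ELcap]
  | succ k ih =>
    rw [memTrade_ELcap_succ (memTradePlay_play hcap)]
    by_cases h : k % (cap + 1) = cap <;>
      simp [memTradePlay_eq_zero_iff, succ_mod_succ_eq_ite, h, ih]; omega

lemma memTradePlay_mem_avgRecharge {cap : ℕ} (hcap : 0 < cap) :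
    memTradePlay cap ∈ AvgRecharge memTradeW cap ((cap : ℝ) / 2) := by
  refine ⟨limsup_coe_le_of_le_add_div (C := ((cap : ℝ) + 1) ^ 2 / 2) fun m hm => ?_,
    fun k => ?_⟩
  · have hsum := two_mul_sum_range_mod cap m
    have hr : m % (cap + 1) < cap + 1 := Nat.mod_lt _ (by omega)
    have hbound : ((m % (cap + 1) : ℕ) : ℤ) * ((cap : ℤ) + 1 - (m % (cap + 1) : ℕ)) ≤
        ((cap : ℤ) + 1) ^ 2 := by
      have : ((m % (cap + 1) : ℕ) : ℤ) ≤ cap + 1 := by exact_mod_cast hr.le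
      nlinarith
    have hZ : 2 * ∑ i ∈ Finset.range m, ELcap memTradeW cap (memTradePlay cap) i ≤
        m * cap + ((cap : ℤ) + 1) ^ 2 := by
      simp only [memTradePlay_ELcap hcap, Finset.sum_sub_distrib, Finset.sum_const,
        Finset.card_range, nsmul_eq_mul]
      linarith
    have hR : (2 * ∑ i ∈ Finset.range m, (ELcap memTradeW cap (memTradePlay cap) i : ℝ)) ≤
        m * cap + ((cap : ℝ) + 1) ^ 2 := by exact_mod_cast hZ
    have hmR : (0 : ℝ) < m := by exact_mod_cast hm
    rw [avgELcap, div_le_iff₀ hmR, add_mul, div_mul_cancel₀ _ hmR.ne']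
    linarith
  · show 0 ≤ _
    rw [memTradePlay_ELcap hcap]
    have : k % (cap + 1) ≤ cap := Nat.lt_succ_iff.mp (Nat.mod_lt _ (by omega))
    omega

section CounterStrategy

variable (cap : ℕ) [NeZero cap]

/-- Counts the steps since the last visit to `v₀`, modulo `cap`. -/
def counterMem : Mem (Fin 2) (Fin cap) where
  mI := 0
  upd m _ v := if v = 0 then 0 else m + 1

def counterStrategy (h : List (Fin 2)) : Fin 2 :=
  if (counterMem cap).run h = 0 then 0 else 1

lemma counterStrategy_finiteStateOfSize :
    memTradeArena.FiniteStateOfSize cap (counterStrategy cap) :=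
  ⟨Fin cap, inferInstance, counterMem cap, Fintype.card_fin cap,
    fun _ m => if m = 0 then 0 else 1, fun _ _ => rfl⟩

lemma eq_memTradePlay_of_consistentWith_counterStrategy {ρ : ℕ → Fin 2}
    (hρ : memTradeArena.Play ρ)
    (hC : memTradeArena.ConsistentWith memTradeArena.V0 (counterStrategy cap) ρ) :
    ρ = memTradePlay cap := by
  have hnext := (memTradeArena.consistentWith_iff_of_implemented
    (nxt := fun _ m => if m = 0 then 0 else 1) (fun _ _ => rfl) ρ).mp hC
  suffices h : ∀ k, ρ k = memTradePlay cap k ∧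
      ((counterMem cap).track ρ k).val = k % (cap + 1) % cap from funext fun k => (h k).1
  intro k
  induction k with
  | zero => exact ⟨by rw [hρ.1]; rfl, by simp [Mem.track, counterMem]⟩
  | succ k ih =>
    obtain ⟨hρk, htrack⟩ := ih
    have hr : k % (cap + 1) ≤ cap := Nat.lt_succ_iff.mp (Nat.mod_lt _ (by omega))
    have hzero : ρ (k + 1) = 0 ↔ k % (cap + 1) = cap := by
      rcases Fin.two_eq_zero_or_eq_one (ρ k) with h | h
      · have h0 : k % (cap + 1) = 0 := memTradePlay_eq_zero_iff.mp (hρk ▸ h)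
        rw [memTradeArena.succ_eq_one_of_eq_zero hρ h, h0]
        simp [(NeZero.pos cap).ne]
      · have h0 : k % (cap + 1) ≠ 0 := fun h' => by
          rw [← memTradePlay_eq_zero_iff, ← hρk, h] at h'
          exact absurd h' (by decide)
        have htz : (counterMem cap).track ρ k = 0 ↔ k % (cap + 1) = cap := by
          rw [← Fin.val_eq_zero_iff, htrack]
          rcases hr.lt_or_eq with hlt | heq
          · rw [Nat.mod_eq_of_lt hlt]; omega
          · simp [heq]
        rw [hnext k h, ← htz]
        split_ifs with ht <;> simp [ht]
    refine ⟨Fin.two_eq_of_eq_zero_iff (hzero.trans memTradePlay_succ_eq_zero_iff.symm), ?_⟩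
    · change ((if ρ (k + 1) = 0 then 0 else (counterMem cap).track ρ k + 1 : Fin cap)).val = _
      rw [succ_mod_succ_eq_ite]
      by_cases h : k % (cap + 1) = cap
      · simp [hzero.mpr h, h]
      · rw [if_neg (mt hzero.mp h), if_neg h, Fin.val_add, Fin.val_one', htrack, ← Nat.add_mod]

lemma counterStrategy_winningStrategy :
    memTradeArena.WinningStrategy memTradeArena.V0
      (AvgRecharge memTradeW cap ((cap : ℝ) / 2)) (counterStrategy cap) := by
  refine ⟨fun _ v (hv : v = 1) => Or.inr hv, fun ρ hρ hC => ?_⟩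
  rw [eq_memTradePlay_of_consistentWith_counterStrategy cap hρ hC]
  exact memTradePlay_mem_avgRecharge (NeZero.pos cap)

end CounterStrategy

lemma not_winningStrategy_of_finiteStateOfSize_lt {cap n : ℕ} (hn : n < cap)
    {σ : List (Fin 2) → Fin 2}
    (hwin : memTradeArena.WinningStrategy memTradeArena.V0
      (AvgRecharge memTradeW cap ((cap : ℝ) / 2)) σ) :
    ¬ memTradeArena.FiniteStateOfSize n σ := by
  rintro ⟨M, _, mem, rfl, nxt, hσ⟩
  set ρ := memTradeOutcome mem nxt
  have hρ : memTradeArena.Play ρ := memTradeOutcome_play mem nxt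
  obtain ⟨hlimsup, hR⟩ := hwin.2 ρ hρ (memTradeOutcome_consistentWith mem nxt hσ)
  have hlow := memTrade_le_ELcap_of_no_loop_window (cap := cap) hρ
    (memTradeOutcome_no_loop_window mem nxt hR)
  have hle := (le_limsup_coe_of_le fun m hm => memTrade_le_avgELcap hρ hlow hm).trans hlimsup
  have : (Fintype.card M : ℝ) < cap := by exact_mod_cast hn
  linarith [EReal.coe_le_coe_iff.mp hle]

theorem memTrade_memory_requirement_general (cap : ℕ) (h2 : 2 ≤ cap) :
    (∃ σ : List (Fin 2) → Fin 2,
      memTradeArena.WinningStrategy memTradeArena.V0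
        (AvgRecharge memTradeW cap ((cap : ℝ) / 2)) σ ∧
      memTradeArena.FiniteStateOfSize cap σ) ∧
    ∀ n < cap, ¬ ∃ σ : List (Fin 2) → Fin 2,
      memTradeArena.WinningStrategy memTradeArena.V0
        (AvgRecharge memTradeW cap ((cap : ℝ) / 2)) σ ∧
      memTradeArena.FiniteStateOfSize n σ := by
  have : NeZero cap := ⟨by omega⟩
  exact ⟨⟨counterStrategy cap, counterStrategy_winningStrategy cap,
      counterStrategy_finiteStateOfSize cap⟩,
    fun n hn ⟨_, hwin, hfs⟩ => not_winningStrategy_of_finiteStateOfSize_lt hn hwin hfs⟩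

/-- For even `cap ≥ 2` and `t = cap/2`, Player 0 has a winning
strategy of size `cap` for the average-bounded recharge game, but no winning
strategy of size `n` for any `n < cap`. -/
theorem memTrade_memory_requirement (cap : ℕ) (h2 : 2 ≤ cap) (he : Even cap) :
    (∃ σ : List (Fin 2) → Fin 2,
      memTradeArena.WinningStrategy memTradeArena.V0
        (AvgRecharge memTradeW cap ((cap : ℝ) / 2)) σ ∧
      memTradeArena.FiniteStateOfSize cap σ) ∧
    ∀ n < cap, ¬ ∃ σ : List (Fin 2) → Fin 2,
      memTradeArena.WinningStrategy memTradeArena.V0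
        (AvgRecharge memTradeW cap ((cap : ℝ) / 2)) σ ∧
      memTradeArena.FiniteStateOfSize n σ :=
  memTrade_memory_requirement_general cap h2
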